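/- arXiv:2506.06114 — 3 statements merged into one kernel-verified Lean document; each statement's English description precedes it below -/
import Mathlib

section
/- Fix positive dispersions D : Fin m → ℝ and p > 1. The weights w_v = 1/(∑_u (D_v/D_u)^{1/(p-1)}) minimize the function W(w) = ∑_v w_v^p · D_v over all nonnegative weight vectors w with ∑_v w_v = 1. -/
open Finset

lemma tangent_rpow {p : ℝ} (hp : 1 < p) {c x : ℝ} (hc : 0 < c) (hx : 0 ≤ x) :
    c ^ p + p * c ^ (p - 1) * (x - c) ≤ x ^ p := by
  have hs : -1 ≤ x / c - 1 := by
    have : 0 ≤ x / c := div_nonneg hx hc.le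
    linarith
  have h := one_add_mul_self_le_rpow_one_add hs hp.le
  have h1 : (1 : ℝ) + (x / c - 1) = x / c := by ring
  rw [h1, Real.div_rpow hx hc.le] at h
  have hcp : 0 < c ^ p := Real.rpow_pos_of_pos hc p
  have h2 := mul_le_mul_of_nonneg_left h hcp.le
  have h3 : c ^ p * (x ^ p / c ^ p) = x ^ p := by
    field_simp
  rw [h3] at h2
  have h4 : c ^ p * (1 + p * (x / c - 1)) = c ^ p + p * c ^ (p - 1) * (x - c) := by
    have hcpm : c ^ (p - 1) * c = c ^ p := by
      rw [← Real.rpow_add_one hc.ne' (p - 1)]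
      ring_nf
    rw [← hcpm]
    field_simp
  rw [h4] at h2
  exact h2

theorem mwk_weights_optimal (m : ℕ) (D : Fin m → ℝ) (hD : ∀ v, 0 < D v)
    (p : ℝ) (hp : 1 < p)
    (w : Fin m → ℝ) (hw : ∀ v, 0 ≤ w v) (hsum : ∑ v : Fin m, w v = 1) :
    ∑ v : Fin m, ((∑ u : Fin m, (D v / D u) ^ ((1 : ℝ) / (p - 1)))⁻¹) ^ p * D v ≤
      ∑ v : Fin m, (w v) ^ p * D v := by
  rcases Nat.eq_zero_or_pos m with hm | hm
  · subst hm; simp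
  haveI : Nonempty (Fin m) := ⟨⟨0, hm⟩⟩
  have hmne : (Finset.univ : Finset (Fin m)).Nonempty := Finset.univ_nonempty
  set q : ℝ := 1 / (p - 1) with hq
  have hp1 : 0 < p - 1 := by linarith
  have hq0 : 0 < q := div_pos one_pos hp1
  set T : ℝ := ∑ u : Fin m, (D u) ^ (-q) with hT
  have hTpos : 0 < T :=
    Finset.sum_pos (fun u _ => Real.rpow_pos_of_pos (hD u) _) hmne
  set c : Fin m → ℝ := fun v => (D v) ^ (-q) / T with hcdef
  have hcpos : ∀ v, 0 < c v := fun v =>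
    div_pos (Real.rpow_pos_of_pos (hD v) _) hTpos
  have hc : ∀ v, (∑ u : Fin m, (D v / D u) ^ q)⁻¹ = c v := by
    intro v
    have hsum' : ∑ u : Fin m, (D v / D u) ^ q = (D v) ^ q * T := by
      rw [hT, Finset.mul_sum]
      refine Finset.sum_congr rfl fun u _ => ?_
      rw [Real.div_rpow (hD v).le (hD u).le, Real.rpow_neg (hD u).le,
        div_eq_mul_inv]
    rw [hsum', mul_inv]
    simp only [hcdef]
    rw [Real.rpow_neg (hD v).le, div_eq_mul_inv]
  have hcsum : ∑ v : Fin m, c v = 1 := by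
    rw [hcdef]
    rw [← Finset.sum_div, ← hT, div_self hTpos.ne']
  -- the constant: c v ^ (p-1) * D v = T ^ (1 - p)
  have hconst : ∀ v, c v ^ (p - 1) * D v = T ^ (-(p - 1)) := by
    intro v
    rw [hcdef]
    have h1 : ((D v) ^ (-q) / T) ^ (p - 1)
        = (D v) ^ (-q * (p - 1)) / T ^ (p - 1) := by
      rw [Real.div_rpow (Real.rpow_pos_of_pos (hD v) _).le hTpos.le,
        ← Real.rpow_mul (hD v).le]
    have hqp : -q * (p - 1) = -1 := by
      rw [hq, neg_mul, one_div, inv_mul_cancel₀ hp1.ne']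
    rw [h1, hqp, Real.rpow_neg_one, Real.rpow_neg hTpos.le]
    field_simp
    exact div_self (hD v).ne'
  have key : ∀ v : Fin m,
      c v ^ p * D v + p * T ^ (-(p - 1)) * (w v - c v) ≤ w v ^ p * D v := by
    intro v
    have := tangent_rpow hp (hcpos v) (hw v)
    have h := mul_le_mul_of_nonneg_right this (hD v).le
    calc c v ^ p * D v + p * T ^ (-(p - 1)) * (w v - c v)
        = (c v ^ p + p * c v ^ (p - 1) * (w v - c v)) * D v := by
          rw [← hconst v]; ring
      _ ≤ w v ^ p * D v := h
  have hsum2 := Finset.sum_le_sum (fun v (_ : v ∈ Finset.univ) => key v)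
  rw [Finset.sum_add_distrib] at hsum2
  have h3 : ∑ v : Fin m, p * T ^ (-(p - 1)) * (w v - c v) = 0 := by
    rw [← Finset.mul_sum, Finset.sum_sub_distrib, hsum, hcsum]
    ring
  rw [h3, add_zero] at hsum2
  calc ∑ v : Fin m, ((∑ u : Fin m, (D v / D u) ^ ((1 : ℝ) / (p - 1)))⁻¹) ^ p * D v
      = ∑ v : Fin m, c v ^ p * D v := by
        refine Finset.sum_congr rfl fun v _ => ?_
        rw [hc v]
    _ ≤ _ := hsum2
end

section
/- Let m ≥ 1, p > 1, and let D : Fin m → ℝ be positive dispersions. Let R ⊆ Fin m be nonempty (the relevant features) and W its complement (noise features). Suppose: (i) for all noise features t, t' ∈ W, D_t = D_{t'}; and (ii) for each noise feature t, ∑_{u ∈ R} (D_t/D_u)^{1/(p-1)} > |R|. Then for every noise feature t, the weight w_t = 1/(∑_{u=1}^m (D_t/D_u)^{1/(p-1)}) satisfies w_t < 1/m. -/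
open Finset

theorem noise_feature_low_weight (m : ℕ) (hm : 1 ≤ m) (p : ℝ) (hp : 1 < p)
    (D : Fin m → ℝ) (hD : ∀ v, 0 < D v)
    (R : Finset (Fin m)) (hR : R.Nonempty)
    (hnoise_eq : ∀ t ∈ Rᶜ, ∀ t' ∈ Rᶜ, D t = D t')
    (hnoise_disp : ∀ t ∈ Rᶜ, (R.card : ℝ) <
      ∑ u ∈ R, (D t / D u) ^ ((1 : ℝ) / (p - 1))) :
    ∀ t ∈ Rᶜ, (∑ u : Fin m, (D t / D u) ^ ((1 : ℝ) / (p - 1)))⁻¹ < 1 / m := by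
  intro t ht
  have hcomp : ∑ u ∈ Rᶜ, (D t / D u) ^ ((1 : ℝ) / (p - 1)) = (Rᶜ.card : ℝ) := by
    rw [Finset.sum_congr rfl (fun u hu => ?_), Finset.sum_const, nsmul_eq_mul, mul_one]
    rw [hnoise_eq t ht u hu, div_self (hD u).ne', Real.one_rpow]
  have hsplit : ∑ u : Fin m, (D t / D u) ^ ((1 : ℝ) / (p - 1)) =
      (∑ u ∈ R, (D t / D u) ^ ((1 : ℝ) / (p - 1))) + (Rᶜ.card : ℝ) := by
    rw [← hcomp, Finset.sum_add_sum_compl]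
  have hlt : (m : ℝ) < ∑ u : Fin m, (D t / D u) ^ ((1 : ℝ) / (p - 1)) := by
    rw [hsplit]
    have hcard : (R.card : ℝ) + (Rᶜ.card : ℝ) = m := by
      rw [← Nat.cast_add, Finset.card_add_card_compl, Fintype.card_fin]
    linarith [hnoise_disp t ht]
  have hm0 : (0 : ℝ) < m := by exact_mod_cast hm
  exact lt_of_lt_of_eq (inv_strictAnti₀ hm0 hlt) (one_div _).symm
end

section
/- Let a : Fin m → ℝ be positive, and define w(p) = 1/A(p) with A(p) = ∑_u a_u^{1/(p-1)} for p > 1. Then w is differentiable at every p > 1 and |w'(p)| ≤ L(p) / (A(p)^2 (p-1)^2), where L(p) = ∑_u a_u^{1/(p-1)} |log a_u|. -/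
open Finset

theorem mwk_weight_deriv_bound (m : ℕ) (a : Fin m → ℝ) (ha : ∀ u, 0 < a u)
    (p : ℝ) (hp : 1 < p) :
    ∃ w' : ℝ,
      HasDerivAt (fun q : ℝ => (∑ u : Fin m, (a u) ^ ((1 : ℝ) / (q - 1)))⁻¹) w' p ∧
      |w'| ≤ (∑ u : Fin m, (a u) ^ ((1 : ℝ) / (p - 1)) * |Real.log (a u)|) /
        ((∑ u : Fin m, (a u) ^ ((1 : ℝ) / (p - 1))) ^ 2 * (p - 1) ^ 2) := by
  rcases Nat.eq_zero_or_pos m with hm | hm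
  · subst hm
    refine ⟨0, ?_, by simp⟩
    simpa using hasDerivAt_const p ((0 : ℝ))⁻¹
  · have hps : (0:ℝ) < p - 1 := by linarith
    have hps' : p - 1 ≠ 0 := ne_of_gt hps
    -- derivative of q ↦ 1/(q-1)
    have h1 : HasDerivAt (fun q : ℝ => (1 : ℝ) / (q - 1)) (-1 / (p - 1) ^ 2) p := by
      have h0 : HasDerivAt (fun q : ℝ => q - 1) 1 p := (hasDerivAt_id p).sub_const 1
      simpa [one_div, neg_div] using h0.fun_inv hps'
    -- derivative of each summand
    have hterm : ∀ u : Fin m, HasDerivAt (fun q : ℝ => (a u) ^ ((1 : ℝ) / (q - 1)))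
        ((a u) ^ ((1:ℝ) / (p - 1)) * Real.log (a u) * (-1 / (p - 1) ^ 2)) p := by
      intro u
      exact (Real.hasStrictDerivAt_const_rpow (ha u) ((1:ℝ)/(p-1))).hasDerivAt.comp p h1
    set A : ℝ := ∑ u : Fin m, (a u) ^ ((1 : ℝ) / (p - 1)) with hA
    have hApos : 0 < A := by
      apply Finset.sum_pos
      · intro u _; exact Real.rpow_pos_of_pos (ha u) _
      · have : Nonempty (Fin m) := Fin.pos_iff_nonempty.mp hm
        exact Finset.univ_nonempty
    set D : ℝ := ∑ u : Fin m, (a u) ^ ((1:ℝ) / (p - 1)) * Real.log (a u) * (-1 / (p - 1) ^ 2)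
      with hD
    have hsum : HasDerivAt (fun q : ℝ => ∑ u : Fin m, (a u) ^ ((1 : ℝ) / (q - 1))) D p :=
      HasDerivAt.fun_sum fun u _ => hterm u
    refine ⟨-D / A ^ 2, hsum.inv (ne_of_gt hApos), ?_⟩
    set L : ℝ := ∑ u : Fin m, (a u) ^ ((1 : ℝ) / (p - 1)) * |Real.log (a u)| with hL
    have hDle : |D| ≤ L / (p - 1) ^ 2 := by
      calc |D| ≤ ∑ u : Fin m, |(a u) ^ ((1:ℝ) / (p - 1)) * Real.log (a u) * (-1 / (p - 1) ^ 2)| :=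
            Finset.abs_sum_le_sum_abs _ _
        _ = L / (p - 1) ^ 2 := by
            rw [hL, Finset.sum_div]
            refine Finset.sum_congr rfl fun u _ => ?_
            rw [abs_mul, abs_mul, abs_of_pos (Real.rpow_pos_of_pos (ha u) _)]
            rw [abs_div, abs_neg, abs_one, abs_pow, sq_abs]
            field_simp
    have : |(-D / A ^ 2)| = |D| / A ^ 2 := by
      rw [abs_div, abs_neg, abs_pow, sq_abs]
    rw [this]
    rw [div_le_div_iff₀ (by positivity) (by positivity)]
    calc |D| * (A ^ 2 * (p - 1) ^ 2) = (|D| * (p - 1) ^ 2) * A ^ 2 := by ring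
      _ ≤ L * A ^ 2 := by
          apply mul_le_mul_of_nonneg_right _ (by positivity)
          calc |D| * (p - 1) ^ 2 ≤ (L / (p - 1) ^ 2) * (p - 1) ^ 2 :=
                mul_le_mul_of_nonneg_right hDle (by positivity)
            _ = L := by field_simp
end
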